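/- Let (T(t)) and (S(t)) be C₀-semigroups on a Banach space E, with (A,dom(A)) the generator of (T(t)), 0 ∈ ρ(A), and extrapolation data (E₋₁,ι,T₋₁,A₋₁). Let (𝒰(t)) and (𝒱(t)) be the semigroups on 𝓛(E) left implemented by (T(t)) and (S(t)), with (𝒢,dom(𝒢)) the generator of (𝒰(t)). If 𝒦 ∈ 𝒮^{DS,τ_sot}_{t₀}(𝒰) satisfies Ran(𝒦) ⊆ F₀(𝒢) and (𝒢₋₁+𝒦)|_{𝓛(E)} generates (𝒱(t)), then there exists B ∈ 𝒮^{DS}_{t₀}(T) with Ran(B) ⊆ F₀(A) such that 𝒦(C) = B∘C for each C ∈ 𝓛(E). -/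
import Mathlib


open Set Filter Topology MeasureTheory

variable {E E₁ : Type*} [NormedAddCommGroup E] [NormedSpace ℝ E]
  [NormedAddCommGroup E₁] [NormedSpace ℝ E₁]

/-- A `C₀`-semigroup on a Banach space `E`. -/
structure IsC0Semigroup (T : ℝ → E →L[ℝ] E) : Prop where
  map_zero : T 0 = 1
  map_add : ∀ s t : ℝ, 0 ≤ s → 0 ≤ t → T (s + t) = (T s).comp (T t)
  strongCont : ∀ x : E, ContinuousOn (fun t => T t x) (Ici (0:ℝ))

/-- The generator relation of a `C₀`-semigroup: `y = Ax`. -/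
def C0GenRel (T : ℝ → E →L[ℝ] E) (x y : E) : Prop :=
  Tendsto (fun t : ℝ => t⁻¹ • (T t x - x)) (nhdsWithin 0 (Ioi 0)) (nhds y)

/-- Extrapolation data `(E₋₁, ι, T₋₁, A₋₁)` for a `C₀`-semigroup `T` with `0 ∈ ρ(A)`:
`ι : E → E₋₁` is a continuous dense injection, `T₋₁` a `C₀`-semigroup on `E₋₁` extending `T`
via `ι`, whose generator `A₋₁` has domain `ι(E)`, extends `A`, and `Am = A₋₁ ∘ ι : E → E₋₁`
is an isomorphism. -/
structure ExtrapolationData (T : ℝ → E →L[ℝ] E) (T₁ : ℝ → E₁ →L[ℝ] E₁)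
    (ι : E →L[ℝ] E₁) (Am : E ≃L[ℝ] E₁) : Prop where
  c0T : IsC0Semigroup T
  c0T₁ : IsC0Semigroup T₁
  inj : Function.Injective ι
  dense : DenseRange ι
  intertwine : ∀ t : ℝ, 0 ≤ t → ∀ x : E, T₁ t (ι x) = ι (T t x)
  gen₁ : ∀ x : E, C0GenRel T₁ (ι x) (Am x)
  gen₁_dom : ∀ z y : E₁, C0GenRel T₁ z y → z ∈ Set.range ι
  gen_extends : ∀ x y : E, C0GenRel T x y → (Am x : E₁) = ι y
  zero_res : ∃ R : E →L[ℝ] E, (∀ y : E, C0GenRel T (R y) y) ∧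
    ∀ x y : E, C0GenRel T x y → x = R y

/-- The Desch–Schappacher admissibility class `𝒮^{DS}_{t₀}(T)` for a `C₀`-semigroup:
for every strongly continuous `𝓛(E)`-valued `F` the Volterra integrals take values in `ι(E)`,
give a strongly continuous `𝓛(E)`-valued function `V_B F`, and `‖V_B‖ ≤ q < 1`. -/
def MemSDS (T₁ : ℝ → E₁ →L[ℝ] E₁) (ι : E →L[ℝ] E₁) (B : E →L[ℝ] E₁) (t₀ : ℝ) : Prop :=
  ∃ q : ℝ, 0 ≤ q ∧ q < 1 ∧
    ∀ F : ℝ → E →L[ℝ] E, (∀ x : E, ContinuousOn (fun r => F r x) (Icc (0:ℝ) t₀)) →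
      ∃ G : ℝ → E →L[ℝ] E,
        (∀ t ∈ Icc (0:ℝ) t₀, ∀ x : E,
          ι (G t x) = ∫ r in (0:ℝ)..t, T₁ (t - r) (B (F r x))) ∧
        (∀ x : E, ContinuousOn (fun t => G t x) (Icc (0:ℝ) t₀)) ∧
        ∀ c : ℝ, (∀ s ∈ Icc (0:ℝ) t₀, ‖F s‖ ≤ c) → ∀ t ∈ Icc (0:ℝ) t₀, ‖G t‖ ≤ q * c

/-- The semigroup on `𝓛(E)` left implemented by `T`: `𝒰(t)C := T(t) ∘ C`. -/
noncomputable def implemented (T : ℝ → E →L[ℝ] E) (t : ℝ) :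
    (E →L[ℝ] E) →L[ℝ] (E →L[ℝ] E) :=
  ContinuousLinearMap.compL ℝ E E E (T t)

/-- The extrapolated implemented semigroup on `𝓛(E,E₋₁)`: `𝒰₋₁(t)S := T₋₁(t) ∘ S`. -/
noncomputable def implementedExt (T₁ : ℝ → E₁ →L[ℝ] E₁) (t : ℝ) :
    (E →L[ℝ] E₁) →L[ℝ] (E →L[ℝ] E₁) :=
  ContinuousLinearMap.compL ℝ E E₁ E₁ (T₁ t)

/-- Membership in the space `𝔛_{t₀}` of strongly `τ_sot`-continuous, norm-bounded,
bi-equicontinuous functions `F : [0,t₀] → 𝓛(𝓛(E))`. -/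
def MemXsot (t₀ : ℝ) (F : ℝ → (E →L[ℝ] E) →L[ℝ] (E →L[ℝ] E)) : Prop :=
  (∀ (C : E →L[ℝ] E) (x : E), ContinuousOn (fun t => (F t C) x) (Icc (0:ℝ) t₀)) ∧
  (∃ M : ℝ, ∀ t ∈ Icc (0:ℝ) t₀, ‖F t‖ ≤ M) ∧
  ∀ u : ℕ → E →L[ℝ] E, (∃ c : ℝ, ∀ n, ‖u n‖ ≤ c) →
    (∀ x : E, Tendsto (fun n => u n x) atTop (nhds (0:E))) →
    ∀ x : E, ∀ ε > (0:ℝ), ∃ N : ℕ, ∀ n ≥ N, ∀ t ∈ Icc (0:ℝ) t₀, ‖(F t (u n)) x‖ < ε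

/-- The Desch–Schappacher admissibility class `𝒮^{DS,τ_sot}_{t₀}(𝒰)` for the implemented
semigroup: `𝒦 : 𝓛(E) → 𝓛(E,E₋₁)` is `τ_sot`-to-`τ_sot` continuous, and the Volterra operator
`(V_𝒦 F)(t)C = ∫₀ᵗ 𝒰₋₁(t-r) 𝒦(F(r)C) dr` takes values in `𝓛(E)`, maps `𝔛_{t₀}` into itself
and has `‖V_𝒦‖ ≤ q < 1`. -/
def MemSDSsot (T₁ : ℝ → E₁ →L[ℝ] E₁) (ι : E →L[ℝ] E₁)
    (K : (E →L[ℝ] E) →L[ℝ] (E →L[ℝ] E₁)) (t₀ : ℝ) : Prop :=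
  (∀ x : E, ∃ (v : Finset E) (c : ℝ), 0 ≤ c ∧
      ∀ S : E →L[ℝ] E, ‖(K S) x‖ ≤ c * ∑ y ∈ v, ‖S y‖) ∧
  ∃ q : ℝ, 0 ≤ q ∧ q < 1 ∧
    ∀ F : ℝ → (E →L[ℝ] E) →L[ℝ] (E →L[ℝ] E), MemXsot t₀ F →
      ∃ G : ℝ → (E →L[ℝ] E) →L[ℝ] (E →L[ℝ] E), MemXsot t₀ G ∧
        (∀ t ∈ Icc (0:ℝ) t₀, ∀ (C : E →L[ℝ] E) (x : E),
          ι ((G t C) x) = ∫ r in (0:ℝ)..t, T₁ (t - r) ((K (F r C)) x)) ∧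
        ∀ c : ℝ, (∀ s ∈ Icc (0:ℝ) t₀, ‖F s‖ ≤ c) → ∀ t ∈ Icc (0:ℝ) t₀, ‖G t‖ ≤ q * c

/-- A `τ_sot`-bi-continuous semigroup on `𝓛(E)`. -/
structure IsBiContSotSemigroup (U : ℝ → (E →L[ℝ] E) →L[ℝ] (E →L[ℝ] E)) : Prop where
  map_zero : U 0 = 1
  map_add : ∀ s t : ℝ, 0 ≤ s → 0 ≤ t → U (s + t) = (U s).comp (U t)
  strongCont : ∀ (C : E →L[ℝ] E) (x : E), ContinuousOn (fun t => (U t C) x) (Ici (0:ℝ))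
  expBound : ∃ M : ℝ, 1 ≤ M ∧ ∃ ω : ℝ, ∀ t : ℝ, 0 ≤ t → ‖U t‖ ≤ M * Real.exp (ω * t)
  biequi : ∀ t₀ : ℝ, 0 < t₀ → ∀ u : ℕ → E →L[ℝ] E, (∃ c : ℝ, ∀ n, ‖u n‖ ≤ c) →
    (∀ x : E, Tendsto (fun n => u n x) atTop (nhds (0:E))) →
    ∀ x : E, ∀ ε > (0:ℝ), ∃ N : ℕ, ∀ n ≥ N, ∀ t ∈ Icc (0:ℝ) t₀, ‖(U t (u n)) x‖ < ε

/-- The generator relation of a `τ_sot`-bi-continuous semigroup on `𝓛(E)`. -/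
def SotGenRel (U : ℝ → (E →L[ℝ] E) →L[ℝ] (E →L[ℝ] E)) (C Y : E →L[ℝ] E) : Prop :=
  (∀ x : E, Tendsto (fun t : ℝ => t⁻¹ • ((U t C) x - C x))
      (nhdsWithin 0 (Ioi 0)) (nhds (Y x))) ∧
    ∃ M : ℝ, ∀ t ∈ Ioc (0:ℝ) 1, ‖U t C - C‖ ≤ M * t

/-- `V` is a `τ_sot`-bi-continuous semigroup on `𝓛(E)` generated by `(𝒢₋₁ + 𝒦)|_{𝓛(E)}`,
where `𝒢₋₁ C = A₋₁ ∘ ι ∘ C` and the domain is `{C : 𝒢₋₁C + 𝒦C ∈ 𝓛(E)}`. -/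
def GeneratedByPerturbedImpl (V : ℝ → (E →L[ℝ] E) →L[ℝ] (E →L[ℝ] E))
    (ι : E →L[ℝ] E₁) (Am : E ≃L[ℝ] E₁)
    (K : (E →L[ℝ] E) →L[ℝ] (E →L[ℝ] E₁)) : Prop :=
  IsBiContSotSemigroup V ∧ ∀ C Y : E →L[ℝ] E,
    SotGenRel V C Y ↔ ι.comp Y = ((Am : E →L[ℝ] E₁)).comp C + K C


section AuxLemmas

variable {X Y : Type*} [NormedAddCommGroup X] [NormedSpace ℝ X]
  [NormedAddCommGroup Y] [NormedSpace ℝ Y]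

/-- uniform bound on a compact interval for a strongly continuous operator family -/
lemma opfam_bound [CompleteSpace X] {S : ℝ → X →L[ℝ] Y} {b : ℝ}
    (h : ∀ x, ContinuousOn (fun t => S t x) (Icc (0:ℝ) b)) :
    ∃ M : ℝ, 0 ≤ M ∧ ∀ s ∈ Icc (0:ℝ) b, ‖S s‖ ≤ M := by
  have hpt : ∀ x : X, ∃ C, ∀ i : Icc (0:ℝ) b, ‖S i x‖ ≤ C := by
    intro x
    obtain ⟨C, hC⟩ := isCompact_Icc.exists_bound_of_continuousOn (h x)
    exact ⟨C, fun i => hC i i.2⟩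
  obtain ⟨C', hC'⟩ := banach_steinhaus (g := fun i : Icc (0:ℝ) b => S i) hpt
  exact ⟨max C' 0, le_max_right _ _, fun s hs => le_trans (hC' ⟨s, hs⟩) (le_max_left _ _)⟩

/-- averaging lemma: `h⁻¹ ∫_a^{a+h} f → f a` as `h → 0⁺` -/
lemma avg_tendsto [CompleteSpace X] {f : ℝ → X} (hf : ContinuousOn f (Ici (0:ℝ)))
    {a : ℝ} (ha : 0 ≤ a) :
    Tendsto (fun h : ℝ => h⁻¹ • ∫ s in a..(a+h), f s) (𝓝[>] (0:ℝ)) (𝓝 (f a)) := by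
  rw [Metric.tendsto_nhds]
  intro ε hε
  have hca : ContinuousWithinAt f (Ici (0:ℝ)) a := hf a ha
  rw [Metric.continuousWithinAt_iff] at hca
  obtain ⟨δ, hδ, hδ'⟩ := hca (ε/2) (by linarith)
  filter_upwards [Ioo_mem_nhdsGT_of_mem (by constructor <;> [rfl; exact hδ] :
      (0:ℝ) ∈ Ico 0 δ)] with h hh
  have h0 : 0 < h := hh.1
  have hint : IntervalIntegrable f volume a (a+h) := by
    apply ContinuousOn.intervalIntegrable
    apply hf.mono
    intro s hs
    rw [uIcc_of_le (by linarith)] at hs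
    exact le_trans ha hs.1
  have hsub : (h⁻¹ • ∫ s in a..(a+h), f s) - f a
      = h⁻¹ • ∫ s in a..(a+h), (f s - f a) := by
    rw [intervalIntegral.integral_sub hint (intervalIntegrable_const),
      intervalIntegral.integral_const, smul_sub, add_sub_cancel_left, smul_smul,
      inv_mul_cancel₀ (ne_of_gt h0), one_smul]
  have hbd : ‖∫ s in a..(a+h), (f s - f a)‖ ≤ (ε/2) * |a + h - a| := by
    apply intervalIntegral.norm_integral_le_of_norm_le_const
    intro s hs
    rw [uIoc_of_le (by linarith)] at hs
    have hs0 : s ∈ Ici (0:ℝ) := le_trans ha (le_of_lt hs.1)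
    have hd : dist s a < δ := by
      rw [Real.dist_eq, abs_of_nonneg (by linarith [hs.1.le])]
      linarith [hs.2, hh.2]
    have := hδ' hs0 hd
    rw [dist_eq_norm] at this
    exact this.le
  rw [dist_eq_norm, hsub, norm_smul, Real.norm_eq_abs,
    abs_of_pos (by positivity : (0:ℝ) < h⁻¹)]
  calc h⁻¹ * ‖∫ s in a..(a+h), (f s - f a)‖ ≤ h⁻¹ * ((ε/2) * |a + h - a|) :=
        mul_le_mul_of_nonneg_left hbd (by positivity)
    _ = ε/2 := by rw [add_sub_cancel_left, abs_of_pos h0]; field_simp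
    _ < ε := by linarith

/-- averaging lemma at `0` -/
lemma avg_tendsto0 [CompleteSpace X] {f : ℝ → X} (hf : ContinuousOn f (Ici (0:ℝ))) :
    Tendsto (fun h : ℝ => h⁻¹ • ∫ s in (0:ℝ)..h, f s) (𝓝[>] (0:ℝ)) (𝓝 (f 0)) := by
  have := avg_tendsto hf (le_refl (0:ℝ))
  simpa using this

end AuxLemmas

section MainAux

variable [CompleteSpace E] {S : ℝ → E →L[ℝ] E}

lemma S_intInt (hS : IsC0Semigroup S) (x : E) {a b : ℝ} (ha : 0 ≤ a) (hb : 0 ≤ b) :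
    IntervalIntegrable (fun s => S s x) volume a b := by
  apply ContinuousOn.intervalIntegrable
  apply (hS.strongCont x).mono
  intro s hs
  exact le_trans (le_min ha hb) hs.1

/-- the operator `x ↦ ∫₀ᵗ S s x ds` -/
noncomputable def Jmap (hS : IsC0Semigroup S) (t : ℝ) (ht : 0 ≤ t) : E →L[ℝ] E :=
  LinearMap.mkContinuousOfExistsBound
    { toFun := fun x => ∫ s in (0:ℝ)..t, S s x
      map_add' := fun x y => by
        rw [← intervalIntegral.integral_add (S_intInt hS x le_rfl ht)
          (S_intInt hS y le_rfl ht)]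
        simp
      map_smul' := fun c x => by
        rw [← intervalIntegral.integral_smul]
        simp }
    (by
      obtain ⟨M, hM0, hM⟩ := opfam_bound (b := t)
        (fun x => (hS.strongCont x).mono (fun s hs => hs.1))
      refine ⟨M * t, fun x => ?_⟩
      have : ‖∫ s in (0:ℝ)..t, S s x‖ ≤ M * ‖x‖ * |t - 0| := by
        apply intervalIntegral.norm_integral_le_of_norm_le_const
        intro s hs
        rw [uIoc_of_le ht] at hs
        exact le_trans ((S s).le_opNorm x)
          (mul_le_mul_of_nonneg_right (hM s ⟨hs.1.le, hs.2⟩) (norm_nonneg x))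
      simpa [abs_of_nonneg ht, mul_comm, mul_left_comm, mul_assoc] using this)

lemma Jmap_apply (hS : IsC0Semigroup S) (t : ℝ) (ht : 0 ≤ t) (x : E) :
    Jmap hS t ht x = ∫ s in (0:ℝ)..t, S s x := rfl

/-- key semigroup computation for the averaged operators -/
lemma J_shift (hS : IsC0Semigroup S) (t : ℝ) (ht : 0 ≤ t) (h : ℝ) (hh : 0 ≤ h) (x : E) :
    S h (Jmap hS t ht x) - Jmap hS t ht x
      = (∫ u in t..(t+h), S u x) - ∫ u in (0:ℝ)..h, S u x := by
  have h1 : S h (Jmap hS t ht x) = ∫ s in (0:ℝ)..t, S h (S s x) :=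
    ((S h).intervalIntegral_comp_comm (S_intInt hS x le_rfl ht)).symm
  have h2 : (∫ s in (0:ℝ)..t, S h (S s x)) = ∫ s in (0:ℝ)..t, S (h + s) x := by
    apply intervalIntegral.integral_congr
    intro s hs
    rw [uIcc_of_le ht] at hs
    show S h (S s x) = S (h + s) x
    rw [hS.map_add h s hh hs.1]
    rfl
  have h3 : (∫ s in (0:ℝ)..t, S (h + s) x) = ∫ u in h..(h+t), S u x := by
    rw [intervalIntegral.integral_comp_add_left (fun u => S u x) h, add_zero]
  have c1 : (∫ u in (0:ℝ)..h, S u x) + ∫ u in h..(h+t), S u x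
      = ∫ u in (0:ℝ)..(h+t), S u x :=
    intervalIntegral.integral_add_adjacent_intervals (S_intInt hS x le_rfl hh)
      (S_intInt hS x hh (by linarith))
  have c2 : (∫ u in (0:ℝ)..t, S u x) + ∫ u in t..(t+h), S u x
      = ∫ u in (0:ℝ)..(t+h), S u x :=
    intervalIntegral.integral_add_adjacent_intervals (S_intInt hS x le_rfl ht)
      (S_intInt hS x ht (by linarith))
  rw [h1, h2, h3, Jmap_apply]
  have e : (h + t) = (t + h) := by ring
  rw [e] at c1
  rw [e, sub_eq_sub_iff_add_eq_add,
    add_comm (∫ u in h..(t+h), S u x) (∫ u in (0:ℝ)..h, S u x), c1,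
    add_comm (∫ u in t..(t+h), S u x) (∫ u in (0:ℝ)..t, S u x)]
  exact c2.symm

/-- the averaged operators belong to the domain of the generator of the implemented
semigroup -/
lemma genrel_avg (hS : IsC0Semigroup S) (t : ℝ) (ht : 0 < t) :
    SotGenRel (implemented S) (t⁻¹ • Jmap hS t ht.le) (t⁻¹ • (S t - 1)) := by
  constructor
  · intro x
    have base : Tendsto (fun h : ℝ => h⁻¹ • (S h (Jmap hS t ht.le x) - Jmap hS t ht.le x))
        (𝓝[>] (0:ℝ)) (𝓝 (S t x - x)) := by
      have l1 : Tendsto (fun h : ℝ => h⁻¹ • ∫ u in t..(t+h), S u x)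
          (𝓝[>] (0:ℝ)) (𝓝 (S t x)) := avg_tendsto (hS.strongCont x) ht.le
      have l2 : Tendsto (fun h : ℝ => h⁻¹ • ∫ u in (0:ℝ)..h, S u x)
          (𝓝[>] (0:ℝ)) (𝓝 x) := by
        have := avg_tendsto0 (hS.strongCont x)
        rw [hS.map_zero] at this
        simpa using this
      apply Tendsto.congr' ?_ (l1.sub l2)
      filter_upwards [self_mem_nhdsWithin] with h hh
      rw [← smul_sub, ← J_shift hS t ht.le h (le_of_lt hh) x]
    have efun : ∀ h : ℝ, h⁻¹ • ((implemented S h (t⁻¹ • Jmap hS t ht.le)) x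
        - (t⁻¹ • Jmap hS t ht.le) x)
        = t⁻¹ • (h⁻¹ • (S h (Jmap hS t ht.le x) - Jmap hS t ht.le x)) := by
      intro h
      show h⁻¹ • (S h (t⁻¹ • Jmap hS t ht.le x) - t⁻¹ • Jmap hS t ht.le x) = _
      rw [(S h).map_smul, ← smul_sub, smul_comm]
    have etgt : (t⁻¹ • (S t - 1)) x = t⁻¹ • (S t x - x) := rfl
    rw [etgt]
    simp only [efun]
    exact base.const_smul t⁻¹
  · obtain ⟨M, hM0, hM⟩ := opfam_bound (b := t + 1)
      (fun x => (hS.strongCont x).mono (fun s hs => hs.1))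
    refine ⟨t⁻¹ * (2 * M), fun h hh => ?_⟩
    have key : implemented S h (t⁻¹ • Jmap hS t ht.le) - t⁻¹ • Jmap hS t ht.le
        = t⁻¹ • ((S h).comp (Jmap hS t ht.le) - Jmap hS t ht.le) := by
      ext x
      show S h (t⁻¹ • Jmap hS t ht.le x) - t⁻¹ • Jmap hS t ht.le x = _
      rw [(S h).map_smul, ← smul_sub]
      rfl
    rw [key]
    refine le_trans (ContinuousLinearMap.opNorm_smul_le _ _) ?_
    rw [Real.norm_eq_abs, abs_of_pos (by positivity : (0:ℝ) < t⁻¹)]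
    have hD : ‖(S h).comp (Jmap hS t ht.le) - Jmap hS t ht.le‖ ≤ 2 * M * h := by
      apply ContinuousLinearMap.opNorm_le_bound _
        (mul_nonneg (mul_nonneg two_pos.le hM0) hh.1.le)
      intro x
      have e : ((S h).comp (Jmap hS t ht.le) - Jmap hS t ht.le) x
          = (∫ u in t..(t+h), S u x) - ∫ u in (0:ℝ)..h, S u x :=
        J_shift hS t ht.le h hh.1.le x
      rw [e]
      have b1 : ‖∫ u in t..(t+h), S u x‖ ≤ M * ‖x‖ * |t + h - t| := by
        apply intervalIntegral.norm_integral_le_of_norm_le_const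
        intro s hs
        rw [uIoc_of_le (by linarith [hh.1.le])] at hs
        have hsmem : s ∈ Icc (0:ℝ) (t+1) :=
          ⟨by linarith [hs.1.le, ht.le], by linarith [hs.2, hh.2]⟩
        exact le_trans ((S s).le_opNorm x)
          (mul_le_mul_of_nonneg_right (hM s hsmem) (norm_nonneg x))
      have b2 : ‖∫ u in (0:ℝ)..h, S u x‖ ≤ M * ‖x‖ * |h - 0| := by
        apply intervalIntegral.norm_integral_le_of_norm_le_const
        intro s hs
        rw [uIoc_of_le hh.1.le] at hs
        have hsmem : s ∈ Icc (0:ℝ) (t+1) :=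
          ⟨hs.1.le, by linarith [hs.2, hh.2, ht.le]⟩
        exact le_trans ((S s).le_opNorm x)
          (mul_le_mul_of_nonneg_right (hM s hsmem) (norm_nonneg x))
      rw [add_sub_cancel_left, abs_of_pos hh.1] at b1
      rw [sub_zero, abs_of_pos hh.1] at b2
      calc ‖(∫ u in t..(t+h), S u x) - ∫ u in (0:ℝ)..h, S u x‖
          ≤ ‖∫ u in t..(t+h), S u x‖ + ‖∫ u in (0:ℝ)..h, S u x‖ := norm_sub_le _ _
        _ ≤ M * ‖x‖ * h + M * ‖x‖ * h := add_le_add b1 b2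
        _ = 2 * M * h * ‖x‖ := by ring
    calc t⁻¹ * ‖(S h).comp (Jmap hS t ht.le) - Jmap hS t ht.le‖
        ≤ t⁻¹ * (2 * M * h) := mul_le_mul_of_nonneg_left hD (by positivity)
      _ = t⁻¹ * (2 * M) * h := by ring

end MainAux

/-- If `𝒦 ∈ 𝒮^{DS,τ_sot}_{t₀}(𝒰)` has range in the extrapolated Favard
class `F₀(𝒢)` and `(𝒢₋₁+𝒦)|_{𝓛(E)}` generates the implemented semigroup `𝒱`, then `𝒦` is
left multiplication by some `B ∈ 𝒮^{DS}_{t₀}(T)` with range in `F₀(A)`. -/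
theorem stmt_13 [CompleteSpace E] [CompleteSpace E₁]
    (T S : ℝ → E →L[ℝ] E) (T₁ : ℝ → E₁ →L[ℝ] E₁) (ι : E →L[ℝ] E₁) (Am : E ≃L[ℝ] E₁)
    (hExt : ExtrapolationData T T₁ ι Am) (hS : IsC0Semigroup S)
    (t₀ : ℝ) (ht₀ : 0 < t₀) (K : (E →L[ℝ] E) →L[ℝ] (E →L[ℝ] E₁))
    (hK : MemSDSsot T₁ ι K t₀)
    (hKFav : ∀ C : E →L[ℝ] E, ∃ M' : ℝ, ∀ s ∈ Ioo (0:ℝ) 1,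
      ‖implementedExt T₁ s (K C) - K C‖ ≤ M' * s)
    (hgen : GeneratedByPerturbedImpl (implemented S) ι Am K) :
    ∃ B : E →L[ℝ] E₁, MemSDS T₁ ι B t₀ ∧
      (∀ x : E, ∃ M' : ℝ, ∀ s ∈ Ioo (0:ℝ) 1, ‖T₁ s (B x) - B x‖ ≤ M' * s) ∧
      ∀ C : E →L[ℝ] E, K C = B.comp C := by
  obtain ⟨hK1, q, hq0, hq1, hqV⟩ := hK
  obtain ⟨hVsg, hgen2⟩ := hgen
  -- Step 1: the product rule on the domain of the generator
  have prod_rule : ∀ (C Y D : E →L[ℝ] E), SotGenRel (implemented S) C Y →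
      K (C.comp D) = (K C).comp D := by
    intro C Y D hCY
    have hCD : SotGenRel (implemented S) (C.comp D) (Y.comp D) := by
      constructor
      · intro x
        exact hCY.1 (D x)
      · obtain ⟨M, hM⟩ := hCY.2
        refine ⟨M * ‖D‖, fun h hh => ?_⟩
        have key : implemented S h (C.comp D) - C.comp D
            = (implemented S h C - C).comp D := by
          ext x; rfl
        rw [key]
        calc ‖(implemented S h C - C).comp D‖ ≤ ‖implemented S h C - C‖ * ‖D‖ :=
              ContinuousLinearMap.opNorm_comp_le _ _
          _ ≤ (M * h) * ‖D‖ := mul_le_mul_of_nonneg_right (hM h hh) (norm_nonneg D)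
          _ = M * ‖D‖ * h := by ring
    have e1 := (hgen2 C Y).1 hCY
    have e2 := (hgen2 (C.comp D) (Y.comp D)).1 hCD
    ext x
    have p1 := congrArg (fun L : E →L[ℝ] E₁ => L (D x)) e1
    have p2 := congrArg (fun L : E →L[ℝ] E₁ => L x) e2
    simp only [ContinuousLinearMap.coe_comp', Function.comp_apply,
      ContinuousLinearMap.add_apply] at p1 p2
    show K (C.comp D) x = K C (D x)
    exact add_left_cancel (p2.symm.trans p1)
  -- Step 2: averaged approximations of the identity
  set Cop : ℝ → E →L[ℝ] E :=
    fun t => if ht : 0 < t then t⁻¹ • Jmap hS t ht.le else 0 with hCop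
  have hCopEq : ∀ t : ℝ, ∀ ht : 0 < t, Cop t = t⁻¹ • Jmap hS t ht.le := by
    intro t ht
    rw [hCop]
    exact dif_pos ht
  have hCopLim : ∀ y : E, Tendsto (fun t => Cop t y) (𝓝[>] (0:ℝ)) (𝓝 y) := by
    intro y
    have l2 : Tendsto (fun t : ℝ => t⁻¹ • ∫ s in (0:ℝ)..t, S s y) (𝓝[>] (0:ℝ)) (𝓝 y) := by
      have := avg_tendsto0 (hS.strongCont y)
      rw [hS.map_zero] at this
      simpa using this
    apply Tendsto.congr' ?_ l2
    filter_upwards [self_mem_nhdsWithin] with t ht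
    rw [hCopEq t ht]
    rfl
  -- Step 3: K is left multiplication by K 1
  have hmul : ∀ D : E →L[ℝ] E, K D = (K 1).comp D := by
    intro D
    ext x
    show K D x = K 1 (D x)
    have lim1 : Tendsto (fun t => K ((Cop t).comp D) x) (𝓝[>] (0:ℝ)) (𝓝 (K D x)) := by
      rw [tendsto_iff_norm_sub_tendsto_zero]
      obtain ⟨v, c, hc0, hbd⟩ := hK1 x
      have hbound : ∀ t : ℝ, ‖K ((Cop t).comp D) x - K D x‖
          ≤ c * ∑ y ∈ v, ‖Cop t (D y) - D y‖ := by
        intro t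
        have e : K ((Cop t).comp D) x - K D x = K ((Cop t).comp D - D) x := by
          rw [map_sub]
          rfl
        rw [e]
        refine le_trans (hbd _) (mul_le_mul_of_nonneg_left ?_ hc0)
        apply Finset.sum_le_sum
        intro y _
        exact le_of_eq rfl
      have hlim0 : Tendsto (fun t => c * ∑ y ∈ v, ‖Cop t (D y) - D y‖)
          (𝓝[>] (0:ℝ)) (𝓝 0) := by
        have hsum : Tendsto (fun t => ∑ y ∈ v, ‖Cop t (D y) - D y‖)
            (𝓝[>] (0:ℝ)) (𝓝 0) := by
          have := tendsto_finset_sum v (fun y (_ : y ∈ v) =>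
            tendsto_iff_norm_sub_tendsto_zero.mp (hCopLim (D y)))
          simpa using this
        simpa using hsum.const_mul c
      exact squeeze_zero (fun t => norm_nonneg _) hbound hlim0
    have lim2 : Tendsto (fun t => K (Cop t) (D x)) (𝓝[>] (0:ℝ)) (𝓝 (K 1 (D x))) := by
      rw [tendsto_iff_norm_sub_tendsto_zero]
      obtain ⟨v, c, hc0, hbd⟩ := hK1 (D x)
      have hbound : ∀ t : ℝ, ‖K (Cop t) (D x) - K 1 (D x)‖
          ≤ c * ∑ y ∈ v, ‖Cop t y - y‖ := by
        intro t
        have e : K (Cop t) (D x) - K 1 (D x) = K (Cop t - 1) (D x) := by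
          rw [map_sub]
          rfl
        rw [e]
        refine le_trans (hbd _) (mul_le_mul_of_nonneg_left ?_ hc0)
        apply Finset.sum_le_sum
        intro y _
        exact le_of_eq rfl
      have hlim0 : Tendsto (fun t => c * ∑ y ∈ v, ‖Cop t y - y‖)
          (𝓝[>] (0:ℝ)) (𝓝 0) := by
        have hsum : Tendsto (fun t => ∑ y ∈ v, ‖Cop t y - y‖) (𝓝[>] (0:ℝ)) (𝓝 0) := by
          have := tendsto_finset_sum v (fun y (_ : y ∈ v) =>
            tendsto_iff_norm_sub_tendsto_zero.mp (hCopLim y))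
          simpa using this
        simpa using hsum.const_mul c
      exact squeeze_zero (fun t => norm_nonneg _) hbound hlim0
    have heq : ∀ᶠ t in 𝓝[>] (0:ℝ), K ((Cop t).comp D) x = K (Cop t) (D x) := by
      filter_upwards [self_mem_nhdsWithin] with t ht
      have hrel := genrel_avg hS t ht
      rw [← hCopEq t ht] at hrel
      have := prod_rule _ _ D hrel
      exact congrArg (fun L : E →L[ℝ] E₁ => L x) this
    exact tendsto_nhds_unique lim1 (Filter.Tendsto.congr' (Filter.EventuallyEq.symm heq) lim2)
  refine ⟨K 1, ?_, ?_, fun C => hmul C⟩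
  · -- MemSDS
    refine ⟨q, hq0, hq1, ?_⟩
    intro F hF
    obtain ⟨MF, hMF0, hMF⟩ := opfam_bound (b := t₀) hF
    set Ft : ℝ → (E →L[ℝ] E) →L[ℝ] (E →L[ℝ] E) :=
      fun t => ContinuousLinearMap.compL ℝ E E E (F t) with hFt
    have hFtX : MemXsot t₀ Ft := by
      refine ⟨fun C x => hF (C x), ⟨MF, fun t ht => ?_⟩, fun u hu hnull x ε hε => ?_⟩
      · apply ContinuousLinearMap.opNorm_le_bound _ hMF0
        intro C
        show ‖(F t).comp C‖ ≤ MF * ‖C‖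
        exact le_trans (ContinuousLinearMap.opNorm_comp_le _ _)
          (mul_le_mul_of_nonneg_right (hMF t ht) (norm_nonneg C))
      · obtain ⟨N, hN⟩ := (Metric.tendsto_atTop.mp (hnull x)) (ε / (MF + 1)) (by positivity)
        refine ⟨N, fun n hn t ht => ?_⟩
        show ‖F t ((u n) x)‖ < ε
        have h2 : ‖F t (u n x)‖ ≤ MF * ‖u n x‖ :=
          le_trans ((F t).le_opNorm _)
            (mul_le_mul_of_nonneg_right (hMF t ht) (norm_nonneg _))
        have h3 : ‖u n x‖ < ε / (MF + 1) := by
          have := hN n hn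
          rwa [dist_zero_right] at this
        have h4 : MF * (ε / (MF + 1)) < ε := by
          rw [mul_div_assoc']
          rw [div_lt_iff₀ (by positivity)]
          nlinarith
        calc ‖F t (u n x)‖ ≤ MF * ‖u n x‖ := h2
          _ ≤ MF * (ε / (MF + 1)) := mul_le_mul_of_nonneg_left h3.le hMF0
          _ < ε := h4
    obtain ⟨G', hG'X, hG'ι, hG'norm⟩ := hqV Ft hFtX
    refine ⟨fun t => G' t 1, fun t ht x => ?_, fun x => hG'X.1 1 x, fun c hc t ht => ?_⟩
    · rw [hG'ι t ht 1 x]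
      apply intervalIntegral.integral_congr
      intro r _
      show T₁ (t - r) ((K (Ft r 1)) x) = T₁ (t - r) ((K 1) (F r x))
      have e1 : Ft r 1 = F r := by
        show (F r).comp (ContinuousLinearMap.id ℝ E) = F r
        exact (F r).comp_id
      rw [e1, hmul (F r)]
      rfl
    · have hc0 : 0 ≤ c := le_trans (norm_nonneg (F 0)) (hc 0 ⟨le_rfl, ht₀.le⟩)
      have hFtb : ∀ s ∈ Icc (0:ℝ) t₀, ‖Ft s‖ ≤ c := by
        intro s hs
        apply ContinuousLinearMap.opNorm_le_bound _ hc0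
        intro C
        show ‖(F s).comp C‖ ≤ c * ‖C‖
        exact le_trans (ContinuousLinearMap.opNorm_comp_le _ _)
          (mul_le_mul_of_nonneg_right (hc s hs) (norm_nonneg C))
      have hb := hG'norm c hFtb t ht
      calc ‖G' t 1‖ ≤ ‖G' t‖ * ‖(1 : E →L[ℝ] E)‖ := (G' t).le_opNorm _
        _ ≤ ‖G' t‖ * 1 :=
            mul_le_mul_of_nonneg_left ContinuousLinearMap.norm_id_le (ContinuousLinearMap.opNorm_nonneg _)
        _ = ‖G' t‖ := mul_one _
        _ ≤ q * c := hb
  · -- Favard class of A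
    intro x
    obtain ⟨M', hM'⟩ := hKFav 1
    refine ⟨M' * ‖x‖, fun s hs => ?_⟩
    have e : (implementedExt T₁ s (K 1) - K 1) x = T₁ s (K 1 x) - K 1 x := by
      rw [ContinuousLinearMap.sub_apply]
      congr 1
    rw [← e]
    calc ‖(implementedExt T₁ s (K 1) - K 1) x‖
        ≤ ‖implementedExt T₁ s (K 1) - K 1‖ * ‖x‖ :=
          ContinuousLinearMap.le_opNorm _ _
      _ ≤ (M' * s) * ‖x‖ := mul_le_mul_of_nonneg_right (hM' s hs) (norm_nonneg x)
      _ = M' * ‖x‖ * s := by ring
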